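/- The Jacobian determinant of the inversion map on the group of invertible elements of ℂ[t]/(tⁿ), in the coordinates given by coefficients, is (−1)ⁿ x₀^{−2n}, where x₀ is the constant term. -/

import Mathlib

/-!
In the coefficient basis, multiplication by `x` on `R[t]/(tⁿ)` is a lower-triangular Toeplitz
matrix with diagonal `x₀`, so its determinant is `x₀ⁿ`. Near a unit `x`, the inverse is
`y ↦ (mul y)⁻¹ 1`, which is differentiable because operator inversion is. Differentiating
`y · ι(y) = 1` gives `x · Dι(v) = -v · ι(x) = -ι(x) · v`, i.e. `mul x ∘ Dι = -mul ι(x)`.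
Taking determinants, `x₀ⁿ · det Dι = (-1)ⁿ ι(x)₀ⁿ = (-1)ⁿ x₀⁻ⁿ`.
-/

open Finset

namespace TruncatedPolynomial

section Algebra

open Matrix

variable {R : Type*} [CommRing R] {n : ℕ}

/-- The product of `Σ xᵢ tⁱ` and `Σ yⱼ tʲ` in `R[t]/(tⁿ)`, in coefficients. -/
def truncMul (x y : Fin n → R) : Fin n → R :=
  fun k => ∑ i : Fin n, ∑ j : Fin n, if (i : ℕ) + (j : ℕ) = k then x i * y j else 0

theorem truncMul_comm (x y : Fin n → R) : truncMul x y = truncMul y x := by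
  funext k
  unfold truncMul
  rw [sum_comm]
  simp only [add_comm, mul_comm]

theorem truncMul_apply_zero (hn : 0 < n) (x y : Fin n → R) :
    truncMul x y ⟨0, hn⟩ = x ⟨0, hn⟩ * y ⟨0, hn⟩ := by
  unfold truncMul
  rw [sum_eq_single ⟨0, hn⟩, sum_eq_single ⟨0, hn⟩] <;> simp +contextual [Fin.ext_iff]

def truncMulBilin : (Fin n → R) →ₗ[R] (Fin n → R) →ₗ[R] Fin n → R :=
  LinearMap.mk₂ R truncMul
    (fun _ _ _ => funext fun _ => by
      simp only [truncMul, Pi.add_apply, add_mul, ite_add_zero, sum_add_distrib])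
    (fun _ _ _ => funext fun _ => by
      simp only [truncMul, Pi.smul_apply, smul_eq_mul, mul_sum, mul_ite, mul_zero, mul_assoc])
    (fun _ _ _ => funext fun _ => by
      simp only [truncMul, Pi.add_apply, mul_add, ite_add_zero, sum_add_distrib])
    (fun _ _ _ => funext fun _ => by
      simp only [truncMul, Pi.smul_apply, smul_eq_mul, mul_sum, mul_ite, mul_zero, mul_left_comm])

def mulMatrix (x : Fin n → R) : Matrix (Fin n) (Fin n) R :=
  of fun k j => ∑ i : Fin n, if (i : ℕ) + (j : ℕ) = k then x i else 0

theorem mulMatrix_mulVec (x y : Fin n → R) : mulMatrix x *ᵥ y = truncMul x y := by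
  funext k
  simp only [mulVec, dotProduct, mulMatrix, of_apply, truncMul, sum_mul, ite_mul, zero_mul]
  exact sum_comm

theorem mulMatrix_isLowerTriangular (x : Fin n → R) : (mulMatrix x).IsLowerTriangular := by
  intro k j hkj
  have hlt : (k : ℕ) < j := hkj
  simp only [mulMatrix, of_apply]
  refine sum_eq_zero fun i _ => if_neg ?_
  omega

theorem mulMatrix_apply_self (hn : 0 < n) (x : Fin n → R) (k : Fin n) :
    mulMatrix x k k = x ⟨0, hn⟩ := by
  simp only [mulMatrix, of_apply, add_eq_right]
  rw [sum_eq_single ⟨0, hn⟩] <;> simp +contextual [Fin.ext_iff]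

theorem det_mulMatrix (hn : 0 < n) (x : Fin n → R) : (mulMatrix x).det = x ⟨0, hn⟩ ^ n := by
  rw [det_of_isLowerTriangular _ (mulMatrix_isLowerTriangular x)]
  simp [mulMatrix_apply_self hn]

theorem truncMulBilin_eq_toLin' (x : Fin n → R) : truncMulBilin x = toLin' (mulMatrix x) :=
  LinearMap.ext fun y => (mulMatrix_mulVec x y).symm

theorem det_truncMulBilin (hn : 0 < n) (x : Fin n → R) :
    LinearMap.det (truncMulBilin x) = x ⟨0, hn⟩ ^ n := by
  rw [truncMulBilin_eq_toLin', LinearMap.det_toLin', det_mulMatrix hn]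

end Algebra

section Analysis

open Filter Topology

variable {𝕜 : Type*} [NontriviallyNormedField 𝕜] [CompleteSpace 𝕜] {n : ℕ}

variable (𝕜) in
noncomputable def truncMulCLM : (Fin n → 𝕜) →L[𝕜] (Fin n → 𝕜) →L[𝕜] Fin n → 𝕜 :=
  LinearMap.toContinuousLinearMap (LinearMap.toContinuousLinearMap.toLinearMap ∘ₗ truncMulBilin)

@[simp]
theorem truncMulCLM_apply (x y : Fin n → 𝕜) : truncMulCLM 𝕜 x y = truncMul x y := rfl

theorem det_truncMulCLM (hn : 0 < n) (x : Fin n → 𝕜) :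
    LinearMap.det (truncMulCLM 𝕜 x : (Fin n → 𝕜) →ₗ[𝕜] Fin n → 𝕜) = x ⟨0, hn⟩ ^ n :=
  det_truncMulBilin hn x

theorem isUnit_truncMulCLM (hn : 0 < n) {x : Fin n → 𝕜} (hx : x ⟨0, hn⟩ ≠ 0) :
    IsUnit (truncMulCLM 𝕜 x) := by
  rw [ContinuousLinearMap.isUnit_iff_isUnit_toLinearMap, LinearMap.isUnit_iff_isUnit_det,
    det_truncMulCLM hn]
  exact hx.isUnit.pow n

variable {f : (Fin n → 𝕜) → Fin n → 𝕜} {e x : Fin n → 𝕜}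

theorem eventuallyEq_inverse_truncMulCLM (hn : 0 < n) (hx : x ⟨0, hn⟩ ≠ 0)
    (hf : ∀ᶠ y in 𝓝 x, truncMul y (f y) = e) :
    f =ᶠ[𝓝 x] fun y => Ring.inverse (truncMulCLM 𝕜 y) e := by
  filter_upwards [hf, (continuous_apply _).continuousAt.eventually_ne hx] with y hy hy0
  rw [← hy, ← truncMulCLM_apply, ← mul_apply_eq_comp,
    Ring.inverse_mul_cancel _ (isUnit_truncMulCLM hn hy0), one_apply_eq_self]

theorem differentiableAt_of_eventually_truncMul_eq (hn : 0 < n) (hx : x ⟨0, hn⟩ ≠ 0)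
    (hf : ∀ᶠ y in 𝓝 x, truncMul y (f y) = e) : DifferentiableAt 𝕜 f x :=
  ((truncMulCLM 𝕜).differentiableAt.inverse (isUnit_truncMulCLM hn hx)).clm_apply
    (differentiableAt_const e) |>.congr_of_eventuallyEq (eventuallyEq_inverse_truncMulCLM hn hx hf)

theorem truncMulCLM_comp_fderiv (hn : 0 < n) (hx : x ⟨0, hn⟩ ≠ 0)
    (hf : ∀ᶠ y in 𝓝 x, truncMul y (f y) = e) :
    (truncMulCLM 𝕜 x).comp (fderiv 𝕜 f x) = -truncMulCLM 𝕜 (f x) := by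
  have hprod := (truncMulCLM 𝕜).hasFDerivAt_of_bilinear (hasFDerivAt_id x)
    (differentiableAt_of_eventually_truncMul_eq hn hx hf).hasFDerivAt
  have hzero := hprod.unique ((hasFDerivAt_const e x).congr_of_eventuallyEq hf)
  ext1 v
  have hv := DFunLike.congr_fun hzero v
  simp only [id_eq, ContinuousLinearMap.precompR_apply, ContinuousLinearMap.compL_apply,
    add_apply, ContinuousLinearMap.comp_apply, truncMulCLM_apply,
    ContinuousLinearMap.precompL_apply, ContinuousLinearMap.id_apply, zero_apply] at hv
  rw [truncMul_comm v] at hv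
  simpa using eq_neg_of_add_eq_zero_left hv

theorem pow_mul_det_fderiv_of_eventually_truncMul_eq (hn : 0 < n) (hx : x ⟨0, hn⟩ ≠ 0)
    (hf : ∀ᶠ y in 𝓝 x, truncMul y (f y) = e) :
    x ⟨0, hn⟩ ^ n * LinearMap.det (fderiv 𝕜 f x : (Fin n → 𝕜) →ₗ[𝕜] Fin n → 𝕜)
      = (-1) ^ n * f x ⟨0, hn⟩ ^ n := by
  have h := congrArg (fun L : (Fin n → 𝕜) →L[𝕜] Fin n → 𝕜 =>
    LinearMap.det (L : (Fin n → 𝕜) →ₗ[𝕜] Fin n → 𝕜)) (truncMulCLM_comp_fderiv hn hx hf)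
  rwa [ContinuousLinearMap.toLinearMap_comp, LinearMap.det_comp,
    ContinuousLinearMap.toLinearMap_neg, ← neg_one_smul 𝕜, LinearMap.det_smul,
    Module.finrank_fin_fun, det_truncMulCLM hn, det_truncMulCLM hn] at h

end Analysis

end TruncatedPolynomial

/-- The Jacobian determinant of the inversion map on units of ℂ[t]/(tⁿ), in the
coordinates given by coefficients, is `(−1)ⁿ x₀^{−2n}`. Here `ι x` is the tuple of
coefficients of the inverse: `Σ_{i+j=k} xᵢ·(ι x)ⱼ = δ_{k,0}` for all `k < n`. -/
theorem jacobian_of_inversion (n : ℕ) (hn : 0 < n)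
    (ι : (Fin n → ℂ) → (Fin n → ℂ))
    (hinv : ∀ x : Fin n → ℂ, x ⟨0, hn⟩ ≠ 0 → ∀ k < n,
      (∑ i : Fin n, ∑ j : Fin n,
        if (i : ℕ) + (j : ℕ) = k then x i * ι x j else 0) =
        if k = 0 then 1 else 0)
    (x : Fin n → ℂ) (hx : x ⟨0, hn⟩ ≠ 0) :
    LinearMap.det (fderiv ℂ ι x).toLinearMap
      = (-1) ^ n * (x ⟨0, hn⟩)⁻¹ ^ (2 * n) := by
  open TruncatedPolynomial in
  have hι : ∀ᶠ y in nhds x,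
      truncMul y (ι y) = fun k : Fin n => if (k : ℕ) = 0 then (1 : ℂ) else 0 :=
    ((continuous_apply _).continuousAt.eventually_ne hx).mono fun y hy =>
      funext fun k => hinv y hy k k.isLt
  have hι₀ : ι x ⟨0, hn⟩ = (x ⟨0, hn⟩)⁻¹ :=
    eq_inv_of_mul_eq_one_right ((truncMul_apply_zero hn x (ι x)).symm.trans (hinv x hx 0 hn))
  have hdet := pow_mul_det_fderiv_of_eventually_truncMul_eq hn hx hι
  rw [hι₀] at hdet
  calc LinearMap.det (fderiv ℂ ι x).toLinearMap
      = (x ⟨0, hn⟩)⁻¹ ^ n * (x ⟨0, hn⟩ ^ n * LinearMap.det (fderiv ℂ ι x).toLinearMap) := by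
        rw [inv_pow, inv_mul_cancel_left₀ (pow_ne_zero n hx)]
    _ = (-1) ^ n * (x ⟨0, hn⟩)⁻¹ ^ (2 * n) := by rw [hdet]; ring
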